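/- Let M be an n×n matrix over RatFunc ℂ (n ≥ 1). Then every complex root of (det (M - X • 1)).num lies in the Gershgorin-type region Γ(M) of the polynomial extension of M; that is, for every λ₀ ∈ ℂ with (det (M - X • 1)).num.eval λ₀ = 0 there exists an index i such that ‖λ₀ - eval λ₀ (M̄ i i)‖ ≤ ∑_{j ≠ i} ‖eval λ₀ (M̄ i j)‖. -/

import Mathlib

/-!
Multiplying row `i` of `M - X • 1` by `L i` clears its denominators and gives the polynomial
matrix `M̄ - X • 1`, so `det (M̄ - X • 1) = (∏ i, L i) * det (M - X • 1)`. A root `λ` of the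
numerator of `det (M - X • 1)` is not a root of the coprime denominator, hence a root of
`det (M̄ - X • 1)`: it is an eigenvalue of the complex matrix `M̄(λ)`, and Gershgorin's circle
theorem for `M̄(λ)` gives the claim.
-/

set_option synthInstance.maxHeartbeats 1000000
set_option maxHeartbeats 1000000

open Matrix Polynomial

/-- The polynomial extension `M̄` of a matrix over `RatFunc ℂ`: with
`L i = ∏ j (M i j).denom`, set `M̄ i j = L i * M i j` off the diagonal and
`M̄ i i = L i * (M i i - X) + X` on the diagonal. -/
noncomputable def polyExt {α : Type} [Fintype α] [DecidableEq α]
    (M : Matrix α α (RatFunc ℂ)) : Matrix α α (RatFunc ℂ) :=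
  Matrix.of fun i j =>
    if i = j then
      algebraMap (Polynomial ℂ) (RatFunc ℂ) (∏ k, (M i k).denom) * (M i i - RatFunc.X) +
        RatFunc.X
    else
      algebraMap (Polynomial ℂ) (RatFunc ℂ) (∏ k, (M i k).denom) * M i j

theorem RatFunc.eval_eq_zero_of_algebraMap_eq_mul {K : Type*} [Field K] {p c : K[X]}
    {r : RatFunc K} (hp : algebraMap K[X] (RatFunc K) p = algebraMap K[X] (RatFunc K) c * r)
    {x : K} (hx : r.num.eval x = 0) : p.eval x = 0 := by
  have hr : algebraMap K[X] (RatFunc K) r.num = r * algebraMap K[X] (RatFunc K) r.denom :=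
    (div_eq_iff (algebraMap_ne_zero r.denom_ne_zero)).mp (num_div_denom r)
  have hpc : p * r.denom = c * r.num := by
    apply algebraMap_injective K
    rw [map_mul, map_mul, hp, hr, mul_assoc]
  have hden : r.denom.eval x ≠ 0 := by
    simpa [hx] using aeval_ne_zero_of_isCoprime (isCoprime_num_denom r) x
  have := congrArg (Polynomial.eval x) hpc
  rw [Polynomial.eval_mul, Polynomial.eval_mul, hx, mul_zero] at this
  exact (mul_eq_zero.mp this).resolve_right hden

theorem RingHom.map_det_sub_smul_one {n R S : Type*} [Fintype n] [DecidableEq n] [CommRing R]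
    [CommRing S] (f : R →+* S) (A : Matrix n n R) (x : R) :
    f (A - x • 1).det = (A.map f - f x • 1).det := by
  rw [RingHom.map_det]
  congr 1
  ext i j
  by_cases hij : i = j <;> simp [one_apply, hij]

theorem exists_norm_sub_le_of_det_sub_smul_one_eq_zero {n K : Type*} [Fintype n] [DecidableEq n]
    [NormedField K] {A : Matrix n n K} {μ : K} (h : (A - μ • 1).det = 0) :
    ∃ k, ‖μ - A k k‖ ≤ ∑ j ∈ Finset.univ.erase k, ‖A k j‖ := by
  by_contra! hlt
  refine det_ne_zero_of_sum_row_lt_diag (fun k => ?_) h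
  have hoff : ∑ j ∈ Finset.univ.erase k, ‖(A - μ • 1) k j‖ = ∑ j ∈ Finset.univ.erase k, ‖A k j‖ :=
    Finset.sum_congr rfl fun j hj => by simp [one_apply_ne' (Finset.ne_of_mem_erase hj)]
  have hdiag : ‖(A - μ • 1) k k‖ = ‖μ - A k k‖ := by simp [norm_sub_rev]
  rw [hoff, hdiag]
  exact hlt k

section polyExt

variable {α : Type} [Fintype α] [DecidableEq α] (M : Matrix α α (RatFunc ℂ))

theorem exists_algebraMap_eq_polyExt_apply (i j : α) :
    ∃ q : ℂ[X], algebraMap ℂ[X] (RatFunc ℂ) q = polyExt M i j := by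
  have hL : ∏ k, (M i k).denom ≠ 0 := Finset.prod_ne_zero_iff.mpr fun k _ => (M i k).denom_ne_zero
  obtain ⟨p, hp⟩ := (RatFunc.denom_dvd hL).mp (Finset.dvd_prod_of_mem _ (Finset.mem_univ j))
  have hcleared : algebraMap ℂ[X] (RatFunc ℂ) (∏ k, (M i k).denom) * M i j =
      algebraMap ℂ[X] (RatFunc ℂ) p := by
    rw [hp, mul_div_cancel₀ (algebraMap ℂ[X] (RatFunc ℂ) p) (RatFunc.algebraMap_ne_zero hL)]
  by_cases hij : i = j
  · subst hij
    refine ⟨p - (∏ k, (M i k).denom) * X + X, ?_⟩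
    simp only [polyExt, of_apply, if_pos, map_add, map_sub, map_mul, RatFunc.algebraMap_X,
      ← hcleared]
    ring
  · exact ⟨p, by simp only [polyExt, of_apply, if_neg hij, hcleared]⟩

theorem exists_map_algebraMap_eq_polyExt :
    ∃ P : Matrix α α ℂ[X], P.map (algebraMap ℂ[X] (RatFunc ℂ)) = polyExt M := by
  choose P hP using exists_algebraMap_eq_polyExt_apply M
  exact ⟨of P, ext hP⟩

theorem polyExt_sub_X_smul_one :
    polyExt M - (RatFunc.X : RatFunc ℂ) • 1 =
      diagonal (fun i => algebraMap ℂ[X] (RatFunc ℂ) (∏ k, (M i k).denom)) *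
        (M - (RatFunc.X : RatFunc ℂ) • 1) := by
  ext i j
  by_cases hij : i = j
  · subst hij
    simp [polyExt, diagonal_mul]
  · simp [polyExt, diagonal_mul, hij]

end polyExt

theorem spec_subset_gershgorin_general {n : ℕ}
    (M : Matrix (Fin n) (Fin n) (RatFunc ℂ)) (lam : ℂ)
    (h : (((M - (RatFunc.X : RatFunc ℂ) • 1).det).num).eval lam = 0) :
    ∃ i : Fin n,
      ‖lam - RatFunc.eval (RingHom.id ℂ) lam (polyExt M i i)‖ ≤
        ∑ j ∈ Finset.univ.erase i, ‖RatFunc.eval (RingHom.id ℂ) lam (polyExt M i j)‖ := by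
  obtain ⟨P, hP⟩ := exists_map_algebraMap_eq_polyExt M
  have hdet : algebraMap ℂ[X] (RatFunc ℂ) (P - (X : ℂ[X]) • 1).det =
      algebraMap ℂ[X] (RatFunc ℂ) (∏ i, ∏ k, (M i k).denom) *
        (M - (RatFunc.X : RatFunc ℂ) • 1).det := by
    rw [RingHom.map_det_sub_smul_one, hP, RatFunc.algebraMap_X, polyExt_sub_X_smul_one,
      det_mul, det_diagonal, map_prod]
  have hroot : (P.map (eval lam) - lam • 1).det = 0 := by
    have := RatFunc.eval_eq_zero_of_algebraMap_eq_mul hdet h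
    rwa [← coe_evalRingHom, RingHom.map_det_sub_smul_one, coe_evalRingHom, eval_X] at this
  obtain ⟨i, hi⟩ := exists_norm_sub_le_of_det_sub_smul_one_eq_zero hroot
  exact ⟨i, by simpa [← hP, RatFunc.eval_algebraMap] using hi⟩

theorem spec_subset_gershgorin {n : ℕ} (hn : 1 ≤ n)
    (M : Matrix (Fin n) (Fin n) (RatFunc ℂ)) (lam : ℂ)
    (h : (((M - (RatFunc.X : RatFunc ℂ) • 1).det).num).eval lam = 0) :
    ∃ i : Fin n,
      ‖lam - RatFunc.eval (RingHom.id ℂ) lam (polyExt M i i)‖ ≤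
        ∑ j ∈ Finset.univ.erase i, ‖RatFunc.eval (RingHom.id ℂ) lam (polyExt M i j)‖ :=
  spec_subset_gershgorin_general M lam h
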